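/- If a DFA M satisfies the partial order condition, then the minimal DFA accepting L(M) also satisfies the partial order condition. -/

import Mathlib

/-- Extended transition function of a DFA. -/
def dfaEval {Q A : Type} (δ : Q → A → Q) (q : Q) (w : List A) : Q :=
  w.foldl δ q

/-- Two states are distinguishable if some string sends exactly one of them into `F`. -/
def Disting {Q A : Type} (δ : Q → A → Q) (F : Set Q) (q1 q2 : Q) : Prop :=
  ∃ z : List A, ¬ (dfaEval δ q1 z ∈ F ↔ dfaEval δ q2 z ∈ F)

/-- The partial order condition: there are no distinguishable states `q1 ≠ q2` and
nonempty strings `x, y` with `δ(q1,x) = δ(q2,x) = q2` and `δ(q2,y) = q1`. -/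
def POC {Q A : Type} (δ : Q → A → Q) (F : Set Q) : Prop :=
  ¬ ∃ (q1 q2 : Q) (x y : List A), q1 ≠ q2 ∧ Disting δ F q1 q2 ∧ x ≠ [] ∧ y ≠ [] ∧
      dfaEval δ q1 x = q2 ∧ dfaEval δ q2 x = q2 ∧ dfaEval δ q2 y = q1

/-!
Let `q₁ -x-> q₂ -x-> q₂ -y-> q₁` be a forbidden pattern of the minimal DFA `M'`, with `q₂`
reached by `s`. Replace `x` by a power `X` acting idempotently on the states of the finite
DFA `M`, and then `yX` by a power `Z` acting idempotently on `M`. Both fix `q₂` in `M'`, and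
in `M` the state `p₂ = δ(q₀, s X Z)` is fixed by `X` and by `Z`; writing `Z = Y X` gives the
pattern `p₁ -X-> p₂ -X-> p₂ -Y-> p₁` in `M`. The states `p₁, p₂` are reached by the same
words as `q₁, q₂`, so they are distinguishable because `q₁, q₂` are.
-/

theorem exists_isIdempotentElem_pow {M : Type*} [Monoid M] [Finite M] (a : M) :
    ∃ k, k ≠ 0 ∧ IsIdempotentElem (a ^ k) := by
  obtain ⟨i, j, hij, hpow⟩ := Finite.exists_ne_map_eq_of_infinite (a ^ · : ℕ → M)
  wlog hlt : i < j generalizing i j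
  · exact this j i hij.symm hpow.symm (by omega)
  obtain ⟨p, rfl⟩ := Nat.exists_eq_add_of_lt hlt
  have hshift : ∀ m, i ≤ m → a ^ (m + (p + 1)) = a ^ m := by
    intro m hm
    obtain ⟨r, rfl⟩ := Nat.exists_eq_add_of_le hm
    rw [add_right_comm, pow_add, ← add_assoc, ← hpow, ← pow_add]
  have hperiodic : ∀ t m, i ≤ m → a ^ (m + (p + 1) * t) = a ^ m := by
    intro t
    induction t with
    | zero => simp
    | succ t ih =>
      intro m hm
      rw [mul_add_one, ← add_assoc, hshift _ (by omega), ih m hm]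
  refine ⟨(p + 1) * (i + 1), by positivity, ?_⟩
  rw [IsIdempotentElem, ← pow_add, hperiodic _ _ (by nlinarith)]

section DFA

variable {Q A : Type} (δ : Q → A → Q)

theorem dfaEval_append (q : Q) (u v : List A) :
    dfaEval δ q (u ++ v) = dfaEval δ (dfaEval δ q u) v :=
  List.foldl_append

theorem dfaEval_flatten_replicate (w : List A) (k : ℕ) (q : Q) :
    dfaEval δ q (List.replicate k w).flatten = (dfaEval δ · w)^[k] q := by
  induction k generalizing q with
  | zero => rfl
  | succ k ih => rw [List.replicate_succ, List.flatten_cons, dfaEval_append, ih]; rfl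

theorem dfaEval_flatten_replicate_of_fixed {w : List A} {q : Q} (hq : dfaEval δ q w = q)
    (k : ℕ) : dfaEval δ q (List.replicate k w).flatten = q := by
  rw [dfaEval_flatten_replicate]
  exact Function.iterate_fixed hq k

theorem exists_dfaEval_flatten_replicate_idempotent [Finite Q] (w : List A) :
    ∃ k, k ≠ 0 ∧ ∀ q, dfaEval δ (dfaEval δ q (List.replicate k w).flatten)
      (List.replicate k w).flatten = dfaEval δ q (List.replicate k w).flatten := by
  have : Finite (Function.End Q) := inferInstanceAs (Finite (Q → Q))
  obtain ⟨k, hk, hidem⟩ := exists_isIdempotentElem_pow (M := Function.End Q) (dfaEval δ · w)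
  refine ⟨k, hk, fun q => ?_⟩
  simp only [dfaEval_flatten_replicate]
  exact congrFun hidem q

variable {δ} in
theorem Disting.ne {F : Set Q} {p q : Q} (h : Disting δ F p q) : p ≠ q := by
  rintro rfl
  obtain ⟨z, hz⟩ := h
  exact hz Iff.rfl

variable {δ} in
theorem disting_dfaEval_iff_of_language_eq {Q' : Type} {δ' : Q' → A → Q'} {q0 : Q} {q0' : Q'}
    {F : Set Q} {F' : Set Q'} (hsame : ∀ w, dfaEval δ q0 w ∈ F ↔ dfaEval δ' q0' w ∈ F')
    (u v : List A) :
    Disting δ F (dfaEval δ q0 u) (dfaEval δ q0 v) ↔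
      Disting δ' F' (dfaEval δ' q0' u) (dfaEval δ' q0' v) := by
  simp only [Disting, ← dfaEval_append, hsame]

def IsPOCPattern (q1 q2 : Q) (x y : List A) : Prop :=
  x ≠ [] ∧ y ≠ [] ∧ dfaEval δ q1 x = q2 ∧ dfaEval δ q2 x = q2 ∧ dfaEval δ q2 y = q1

theorem IsPOCPattern.lift [Finite Q] {Q' : Type} {δ' : Q' → A → Q'} {q1' q2' : Q'}
    {x y : List A} (h : IsPOCPattern δ' q1' q2' x y) (a : Q) :
    ∃ w X Y, IsPOCPattern δ (dfaEval δ (dfaEval δ a w) Y) (dfaEval δ a w) X Y ∧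
      dfaEval δ' q2' w = q2' ∧ dfaEval δ' q2' Y = q1' := by
  obtain ⟨hx, hy, hx1, hx2, hy2⟩ := h
  obtain ⟨k, hk, hXidem⟩ := exists_dfaEval_flatten_replicate_idempotent δ x
  set X := (List.replicate k x).flatten
  obtain ⟨l, hl, hZidem⟩ := exists_dfaEval_flatten_replicate_idempotent δ (y ++ X)
  set Z := (List.replicate l (y ++ X)).flatten
  obtain ⟨k, rfl⟩ := Nat.exists_eq_add_one_of_ne_zero hk
  obtain ⟨l, rfl⟩ := Nat.exists_eq_add_one_of_ne_zero hl
  set Y := (List.replicate l (y ++ X)).flatten ++ y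
  have hZ : Z = Y ++ X := by simp [Z, Y, List.replicate_succ']
  have hX2' : dfaEval δ' q2' X = q2' := dfaEval_flatten_replicate_of_fixed δ' hx2 _
  have hX1' : dfaEval δ' q1' X = q2' := by
    rw [show X = x ++ (List.replicate k x).flatten from rfl, dfaEval_append, hx1]
    exact dfaEval_flatten_replicate_of_fixed δ' hx2 _
  have hyX' : dfaEval δ' q2' (y ++ X) = q2' := by rw [dfaEval_append, hy2, hX1']
  refine ⟨X ++ Z, X, Y, ⟨?_, ?_, ?_, ?_, ?_⟩, ?_, ?_⟩
  · simpa [X] using hx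
  · simp [Y, hy]
  · rw [← dfaEval_append, ← hZ, dfaEval_append δ a X Z, hZidem]
  · rw [hZ, ← List.append_assoc, dfaEval_append δ a (X ++ Y) X, hXidem]
  · rfl
  · rw [dfaEval_append, hX2', dfaEval_flatten_replicate_of_fixed δ' hyX']
  · rw [dfaEval_append, dfaEval_flatten_replicate_of_fixed δ' hyX', hy2]

end DFA

theorem minimal_dfa_preserves_partial_order_general {A : Type} (n m : ℕ)
    (δ : Fin n → A → Fin n) (q0 : Fin n) (F : Set (Fin n))
    (δ' : Fin m → A → Fin m) (q0' : Fin m) (F' : Set (Fin m))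
    (hPOC : POC δ F)
    (hsame : ∀ w : List A, dfaEval δ q0 w ∈ F ↔ dfaEval δ' q0' w ∈ F')
    (hreach : ∀ q : Fin m, ∃ s : List A, dfaEval δ' q0' s = q) :
    POC δ' F' := by
  rintro ⟨q1', q2', x, y, -, hdist, hx, hy, hx1, hx2, hy2⟩
  obtain ⟨s, rfl⟩ := hreach q2'
  obtain ⟨w, X, Y, hpattern, hw, hY⟩ :=
    IsPOCPattern.lift δ ⟨hx, hy, hx1, hx2, hy2⟩ (dfaEval δ q0 s)
  have hd := (disting_dfaEval_iff_of_language_eq hsame (s ++ w ++ Y) (s ++ w)).2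
    (by simpa only [dfaEval_append, hw, hY] using hdist)
  simp only [dfaEval_append] at hd
  exact hPOC ⟨_, _, X, Y, hd.ne, hd, hpattern⟩

/-- if a DFA `M` satisfies the partial order condition, then so does the
minimal DFA for `L(M)` — formalized as: any DFA accepting the same language in which all
states are reachable and distinct states are distinguishable (i.e. any automaton
isomorphic to the minimal DFA) satisfies the partial order condition. -/
theorem minimal_dfa_preserves_partial_order {A : Type} (n m : ℕ)
    (δ : Fin n → A → Fin n) (q0 : Fin n) (F : Set (Fin n))
    (δ' : Fin m → A → Fin m) (q0' : Fin m) (F' : Set (Fin m))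
    (hPOC : POC δ F)
    (hsame : ∀ w : List A, dfaEval δ q0 w ∈ F ↔ dfaEval δ' q0' w ∈ F')
    (hreach : ∀ q : Fin m, ∃ s : List A, dfaEval δ' q0' s = q)
    (hreduced : ∀ p q : Fin m, p ≠ q → Disting δ' F' p q) :
    POC δ' F' :=
  minimal_dfa_preserves_partial_order_general n m δ q0 F δ' q0' F' hPOC hsame hreach
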